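/- arXiv:1310.5191 — 8 statements merged into one kernel-verified Lean document; each statement's English description precedes it below -/
import Mathlib

section
/- Define f_{s,r}(q) = q^{((s-r)/2)·⌈s/2⌉}·[⌊s/2⌋ choose (s-r)/2]_q if 0 ≤ r ≤ s and s ≡ r (mod 2), and f_{s,r}(q) = 0 otherwise. Then (f_{s,r})_{s,r ≥ 0} is the unique family of polynomials in ℤ[q] satisfying: p_{0,0} = p_{1,1} = 1; p_{s,r} = 0 whenever r > s or s - r is odd; and p_{s,r} = q^{(s-r)/2} p_{s-2,r-2} + q^{s-1} p_{s-2,r} for all s ≥ 2 and 0 ≤ r ≤ s with s ≡ r (mod 2), where the term p_{s-2,r-2} is interpreted as 0 when r ≤ 1. -/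
open Polynomial

/-- The defining conditions on the family `p = (p_{s,r})` of polynomials in `ℤ[q]`:
`p_{0,0} = p_{1,1} = 1`; `p_{s,r} = 0` whenever `r > s` or `s - r` is odd; and
`p_{s,r} = q^{(s-r)/2} p_{s-2,r-2} + q^{s-1} p_{s-2,r}` for all `s ≥ 2`, `0 ≤ r ≤ s` with
`s ≡ r (mod 2)`, where `p_{s-2,r-2}` is interpreted as `0` when `r ≤ 1`. -/
def SatisfiesWeylDemazureRec (p : ℕ → ℕ → Polynomial ℤ) : Prop :=
  p 0 0 = 1 ∧ p 1 1 = 1 ∧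
  (∀ s r : ℕ, (s < r ∨ s % 2 ≠ r % 2) → p s r = 0) ∧
  (∀ s r : ℕ, 2 ≤ s → r ≤ s → s % 2 = r % 2 →
    p s r = X ^ ((s - r) / 2) * (if r ≤ 1 then 0 else p (s - 2) (r - 2))
      + X ^ (s - 1) * p (s - 2) r)

/-- `gb m l` is the Gaussian binomial coefficient `[m choose l]_q ∈ ℤ[q]` (characterized as in
the context).  Define `f_{s,r} = q^{((s-r)/2)⌈s/2⌉} [⌊s/2⌋ choose (s-r)/2]_q` when
`0 ≤ r ≤ s` and `s ≡ r (mod 2)`, and `f_{s,r} = 0` otherwise.  Then `f` is the unique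
family satisfying the recurrence `SatisfiesWeylDemazureRec`. -/
theorem stmt1
    (gb : ℕ → ℤ → Polynomial ℤ)
    (hgb : ∀ (m : ℕ) (l : ℤ), 0 ≤ l → l ≤ (m : ℤ) →
      gb m l * ∏ i ∈ Finset.range l.toNat, (1 - (X : Polynomial ℤ) ^ (i + 1))
        = ∏ i ∈ Finset.range l.toNat, (1 - (X : Polynomial ℤ) ^ (m - l.toNat + i + 1)))
    (hgb0 : ∀ (m : ℕ) (l : ℤ), l < 0 ∨ (m : ℤ) < l → gb m l = 0)
    (f : ℕ → ℕ → Polynomial ℤ)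
    (hf : ∀ s r : ℕ, f s r =
      if r ≤ s ∧ s % 2 = r % 2 then
        X ^ (((s - r) / 2) * ((s + 1) / 2)) * gb (s / 2) ((((s - r) / 2 : ℕ)) : ℤ)
      else 0) :
    SatisfiesWeylDemazureRec f ∧
      ∀ p : ℕ → ℕ → Polynomial ℤ, SatisfiesWeylDemazureRec p → p = f := by
  -- basic facts about the Gaussian binomials
  have hfac : ∀ n : ℕ, (1 - (X : Polynomial ℤ) ^ (n+1)) ≠ 0 := by
    intro n h
    have := congrArg (fun p => Polynomial.eval 0 p) h
    simp at this
  have hDne : ∀ k : ℕ, (∏ i ∈ Finset.range k, (1 - (X:Polynomial ℤ)^(i+1))) ≠ 0 :=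
    fun k => Finset.prod_ne_zero_iff.mpr fun i _ => hfac i
  have hgbn : ∀ m k : ℕ, k ≤ m →
      gb m (k : ℤ) * ∏ i ∈ Finset.range k, (1 - (X:Polynomial ℤ)^(i+1))
        = ∏ i ∈ Finset.range k, (1 - (X:Polynomial ℤ)^(m - k + i + 1)) := by
    intro m k hk
    have := hgb m k (by positivity) (by exact_mod_cast hk)
    simpa using this
  have gb_zero : ∀ m : ℕ, gb m (0:ℤ) = 1 := by
    intro m; have := hgbn m 0 (Nat.zero_le m); simpa using this
  have gb_diag : ∀ m : ℕ, gb m (m:ℤ) = 1 := by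
    intro m
    have h := hgbn m m le_rfl
    simp only [Nat.sub_self, Nat.zero_add] at h
    exact mul_right_cancel₀ (hDne m) (h.trans (one_mul _).symm)
  have gb_big : ∀ m k : ℕ, m < k → gb m (k:ℤ) = 0 :=
    fun m k h => hgb0 m k (Or.inr (by exact_mod_cast h))
  -- the q-Pascal identity
  have pascal : ∀ m k : ℕ, k ≤ m →
      gb (m+1) ((k+1 : ℕ) : ℤ) = gb m ((k+1 : ℕ) : ℤ) + X ^ (m - k) * gb m (k : ℤ) := by
    intro m k hk
    rcases eq_or_lt_of_le hk with rfl | hlt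
    · rw [gb_diag (k+1), gb_big k (k+1) (by omega), gb_diag k]
      simp
    · apply mul_right_cancel₀ (hDne (k+1))
      have h1 := hgbn (m+1) (k+1) (by omega)
      have h2 := hgbn m (k+1) (by omega)
      have h3 := hgbn m k (by omega)
      rw [h1, add_mul, h2]
      rw [Finset.prod_range_succ (fun i => (1 - (X:Polynomial ℤ)^(i+1))) k]
      have h3' : X ^ (m - k) * gb m (k:ℤ) *
          ((∏ i ∈ Finset.range k, (1 - (X:Polynomial ℤ)^(i+1))) * (1 - X^(k+1)))
          = X ^ (m - k) * (∏ i ∈ Finset.range k, (1 - (X:Polynomial ℤ)^(m-k+i+1)))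
            * (1 - X^(k+1)) := by
        rw [← h3]; ring
      rw [h3']
      have el : ∀ i, m + 1 - (k+1) + i + 1 = m - k + i + 1 := fun i => by omega
      have em : ∀ i, m - (k+1) + i + 1 = m - k + i := fun i => by omega
      have eL : ∏ i ∈ Finset.range (k+1), (1 - (X:Polynomial ℤ)^(m+1-(k+1)+i+1))
          = ∏ i ∈ Finset.range (k+1), (1 - (X:Polynomial ℤ)^(m-k+i+1)) :=
        Finset.prod_congr rfl (fun i _ => by rw [el i])
      have eM : ∏ i ∈ Finset.range (k+1), (1 - (X:Polynomial ℤ)^(m-(k+1)+i+1))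
          = ∏ i ∈ Finset.range (k+1), (1 - (X:Polynomial ℤ)^(m-k+i)) :=
        Finset.prod_congr rfl (fun i _ => by rw [em i])
      rw [eL, eM]
      rw [Finset.prod_range_succ (fun i => (1 - (X:Polynomial ℤ)^(m-k+i+1))) k,
          Finset.prod_range_succ' (fun i => (1 - (X:Polynomial ℤ)^(m-k+i))) k]
      have hpow : (X:Polynomial ℤ)^(m-k) * X^(k+1) = X^(m+1) := by
        rw [← pow_add]; congr 1; omega
      have hpow2 : m - k + k + 1 = m + 1 := by omega
      rw [hpow2]
      set P := ∏ i ∈ Finset.range k, (1 - (X:Polynomial ℤ)^(m-k+i+1)) with hP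
      have hPQ : ∏ x ∈ Finset.range k, (1 - (X:Polynomial ℤ)^(m - k + (x+1))) = P := by
        rw [hP]
        exact Finset.prod_congr rfl
          (fun i _ => by rw [show m-k+(i+1) = m-k+i+1 from by omega])
      rw [hPQ]
      linear_combination P * hpow
  have pascal' : ∀ m k : ℕ, 1 ≤ k → k ≤ m →
      gb m (k : ℤ) = gb (m-1) (k : ℤ) + X ^ (m - k) * gb (m-1) ((k-1 : ℕ) : ℤ) := by
    intro m k hk hkm
    have h := pascal (m-1) (k-1) (by omega)
    rw [show m-1+1 = m from by omega, show k-1+1 = k from by omega,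
        show m-1-(k-1) = m-k from by omega] at h
    exact h
  -- f satisfies the conditions
  have hf00 : f 0 0 = 1 := by rw [hf]; simp [gb_zero]
  have hf11 : f 1 1 = 1 := by rw [hf]; simp [gb_zero]
  have hvanish : ∀ s r : ℕ, (s < r ∨ s % 2 ≠ r % 2) → f s r = 0 := by
    intro s r h; rw [hf, if_neg]; rintro ⟨h1, h2⟩; omega
  have hrec : ∀ s r : ℕ, 2 ≤ s → r ≤ s → s % 2 = r % 2 →
      f s r = X ^ ((s - r) / 2) * (if r ≤ 1 then 0 else f (s - 2) (r - 2))
        + X ^ (s - 1) * f (s - 2) r := by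
    intro s r hs hr hpar
    rcases eq_or_lt_of_le hr with rfl | hlt
    · have c1 : r ≤ r ∧ r % 2 = r % 2 := ⟨le_rfl, rfl⟩
      have c3 : r-2 ≤ r-2 ∧ (r-2) % 2 = (r-2) % 2 := ⟨le_rfl, rfl⟩
      rw [if_neg (by omega : ¬ r ≤ 1), hf r r, if_pos c1, hf (r-2) (r-2), if_pos c3,
        hvanish (r-2) r (Or.inl (by omega))]
      simp [Nat.sub_self, gb_zero]
    · have hr2 : r + 2 ≤ s := by omega
      have hp := pascal' (s/2) ((s-r)/2) (by omega) (by omega)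
      rw [show s/2 - 1 = (s-2)/2 from by omega,
          show (s-r)/2 - 1 = (s-2-r)/2 from by omega] at hp
      have c1 : r ≤ s ∧ s % 2 = r % 2 := ⟨hr, hpar⟩
      have c2 : r ≤ s-2 ∧ (s-2) % 2 = r % 2 := ⟨by omega, by omega⟩
      rw [hf s r, if_pos c1, hp, hf (s-2) r, if_pos c2]
      by_cases hr1 : r ≤ 1
      · rw [if_pos hr1]
        rw [gb_big ((s-2)/2) ((s-r)/2) (by omega), show s/2 - (s-r)/2 = 0 from by omega]
        obtain ⟨K, hK⟩ : ∃ K, (s-2-r)/2 = K := ⟨_, rfl⟩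
        obtain ⟨c, hc⟩ : ∃ c, (s-2+1)/2 = c := ⟨_, rfl⟩
        rw [hK, hc, show (s-r)/2 = K + 1 from by omega,
            show (s+1)/2 = c + 1 from by omega, show s - 1 = K + 1 + c from by omega]
        ring
      · have c3 : r-2 ≤ s-2 ∧ (s-2) % 2 = (r-2) % 2 := ⟨by omega, by omega⟩
        rw [if_neg hr1, hf (s-2) (r-2), if_pos c3]
        obtain ⟨K, hK⟩ : ∃ K, (s-2-r)/2 = K := ⟨_, rfl⟩
        obtain ⟨c, hc⟩ : ∃ c, (s-2+1)/2 = c := ⟨_, rfl⟩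
        obtain ⟨d, hd⟩ : ∃ d, s/2 - (s-r)/2 = d := ⟨_, rfl⟩
        rw [hK, hc, hd, show (s-2-(r-2))/2 = K + 1 from by omega,
            show (s-r)/2 = K + 1 from by omega,
            show (s+1)/2 = c + 1 from by omega,
            show s - 1 = K + 1 + d + c from by omega]
        ring
  refine ⟨⟨hf00, hf11, hvanish, hrec⟩, ?_⟩
  -- uniqueness
  intro p hp
  obtain ⟨hp00, hp11, hpz, hprec⟩ := hp
  funext s
  induction s using Nat.strong_induction_on with
  | _ s ih =>
    funext r
    match s, ih with
    | 0, ih =>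
      match r with
      | 0 => rw [hp00, hf00]
      | (r+1) => rw [hpz 0 (r+1) (Or.inl (by omega)), hvanish 0 (r+1) (Or.inl (by omega))]
    | 1, ih =>
      match r with
      | 0 => rw [hpz 1 0 (Or.inr (by omega)), hvanish 1 0 (Or.inr (by omega))]
      | 1 => rw [hp11, hf11]
      | (r+2) => rw [hpz 1 (r+2) (Or.inl (by omega)), hvanish 1 (r+2) (Or.inl (by omega))]
    | (s+2), ih =>
      by_cases h : r ≤ s + 2 ∧ (s+2) % 2 = r % 2
      · rw [hprec (s+2) r (by omega) h.1 h.2, hrec (s+2) r (by omega) h.1 h.2]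
        have hih : p (s+2-2) = f (s+2-2) := ih (s+2-2) (by omega)
        rw [hih]
      · have h' : s + 2 < r ∨ (s+2) % 2 ≠ r % 2 := by
          rcases Nat.lt_or_ge (s+2) r with h1 | h1
          · exact Or.inl h1
          · exact Or.inr (fun hc => h ⟨h1, hc⟩)
        rw [hpz _ _ h', hvanish _ _ h']
end

section
/- Let ℓ ≥ 2, let b_1, …, b_ℓ ≥ 0 be integers, and let i = (i,j,k) ∈ V_ℓ(ξ) be such that either k < ℓ, or k = ℓ and i - jℓ ≥ ℓ. Then either (i, j+1, k) ∈ V_ℓ(ξ), or there exists a minimal integer m with k ≤ m < ℓ such that (i + m·b_m, 0, m+1) ∈ V_ℓ(ξ). -/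
/-- The vertex set `V_ℓ(ξ)` for `ξ = 1^{b_1}2^{b_2}⋯ℓ^{b_ℓ}`:
`V_ℓ(ξ) = {(i,j,k) ∈ ℤ_{≥0}³ : 2 ≤ k ≤ ℓ, i ≤ Σ_{m=1}^{k-1} m·b_m,
i - jk ≥ k(1 - δ_{k,ℓ})}`. -/
def Vset (ℓ : ℤ) (b : ℤ → ℤ) : Set (ℤ × ℤ × ℤ) :=
  {v | 0 ≤ v.1 ∧ 0 ≤ v.2.1 ∧ 2 ≤ v.2.2 ∧ v.2.2 ≤ ℓ ∧
    v.1 ≤ ∑ m ∈ Finset.Icc 1 (v.2.2 - 1), m * b m ∧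
    v.1 - v.2.1 * v.2.2 ≥ v.2.2 * (1 - if v.2.2 = ℓ then 1 else 0)}

/-- Let `ℓ ≥ 2`, `b_1, …, b_ℓ ≥ 0`, and `(i,j,k) ∈ V_ℓ(ξ)` with either
`k < ℓ`, or `k = ℓ` and `i - jℓ ≥ ℓ`.  Then either `(i, j+1, k) ∈ V_ℓ(ξ)`, or there
exists a minimal integer `m` with `k ≤ m < ℓ` such that `(i + m·b_m, 0, m+1) ∈ V_ℓ(ξ)`. -/
theorem stmt4 (ℓ : ℤ) (hℓ : 2 ≤ ℓ) (b : ℤ → ℤ) (hb : ∀ m, 0 ≤ b m)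
    (i j k : ℤ) (hv : (i, j, k) ∈ Vset ℓ b)
    (h : k < ℓ ∨ (k = ℓ ∧ ℓ ≤ i - j * ℓ)) :
    (i, j + 1, k) ∈ Vset ℓ b ∨
      ∃ m : ℤ, k ≤ m ∧ m < ℓ ∧ (i + m * b m, 0, m + 1) ∈ Vset ℓ b ∧
        ∀ m' : ℤ, k ≤ m' → m' < ℓ → (i + m' * b m', 0, m' + 1) ∈ Vset ℓ b → m ≤ m' := by
  classical
  simp only [Vset, Set.mem_setOf_eq] at hv
  obtain ⟨hi, hj, hk2, hkl, hsum, hlast⟩ := hv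
  rcases h with hk | ⟨hk, hge⟩
  · -- k < ℓ : the set of admissible m is nonempty (m = ℓ - 1 works); take the minimum
    right
    -- sum comparison
    have hnn : ∀ m ∈ Finset.Icc (1 : ℤ) (ℓ - 2), m ∉ Finset.Icc 1 (k - 1) → 0 ≤ m * b m := by
      intro m hm _
      have h1 : (1 : ℤ) ≤ m := (Finset.mem_Icc.mp hm).1
      exact mul_nonneg (by omega) (hb m)
    have hsub : i ≤ ∑ m ∈ Finset.Icc (1 : ℤ) (ℓ - 2), m * b m :=
      le_trans hsum (Finset.sum_le_sum_of_subset_of_nonneg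
        (Finset.Icc_subset_Icc le_rfl (by omega)) hnn)
    have hins : Finset.Icc (1 : ℤ) (ℓ - 1) = insert (ℓ - 1) (Finset.Icc 1 (ℓ - 2)) := by
      ext x; simp only [Finset.mem_Icc, Finset.mem_insert]; omega
    have hnm : (ℓ - 1) ∉ Finset.Icc (1 : ℤ) (ℓ - 2) := by
      simp only [Finset.mem_Icc]; omega
    have hsumL : ∑ m ∈ Finset.Icc (1 : ℤ) (ℓ - 1), m * b m
        = (ℓ - 1) * b (ℓ - 1) + ∑ m ∈ Finset.Icc (1 : ℤ) (ℓ - 2), m * b m := by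
      rw [hins, Finset.sum_insert hnm]
    have hmemL : (i + (ℓ - 1) * b (ℓ - 1), 0, (ℓ - 1) + 1) ∈ Vset ℓ b := by
      simp only [Vset, Set.mem_setOf_eq]
      have hbnn : 0 ≤ (ℓ - 1) * b (ℓ - 1) := mul_nonneg (by omega) (hb _)
      refine ⟨by omega, le_rfl, by omega, by omega, ?_, ?_⟩
      · have : (ℓ - 1) + 1 - 1 = ℓ - 1 := by ring
        rw [this, hsumL]; omega
      · simp only [zero_mul, sub_zero]
        rw [if_pos (by ring)]
        simp only [sub_self, mul_zero]
        omega
    set S : Finset ℤ := (Finset.Icc k (ℓ - 1)).filter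
      (fun m => (i + m * b m, 0, m + 1) ∈ Vset ℓ b) with hS
    have hSne : S.Nonempty := by
      refine ⟨ℓ - 1, Finset.mem_filter.mpr ⟨Finset.mem_Icc.mpr ⟨by omega, le_rfl⟩, hmemL⟩⟩
    refine ⟨S.min' hSne, ?_, ?_, ?_, ?_⟩
    · have := Finset.mem_filter.mp (S.min'_mem hSne)
      exact (Finset.mem_Icc.mp this.1).1
    · have := Finset.mem_filter.mp (S.min'_mem hSne)
      have := (Finset.mem_Icc.mp this.1).2; omega
    · exact (Finset.mem_filter.mp (S.min'_mem hSne)).2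
    · intro m' h1 h2 h3
      exact S.min'_le m' (Finset.mem_filter.mpr ⟨Finset.mem_Icc.mpr ⟨h1, by omega⟩, h3⟩)
  · -- k = ℓ and ℓ ≤ i - jℓ : (i, j+1, k) works
    left
    simp only [Vset, Set.mem_setOf_eq]
    refine ⟨hi, by omega, hk2, hkl, hsum, ?_⟩
    subst hk
    rw [if_pos rfl]
    simp only [sub_self, mul_zero, ge_iff_le]
    nlinarith
end

section
/- Let ℓ ≥ 2, let b_1, …, b_ℓ ≥ 0 be integers, and let i = (i,j,k) ∈ V_ℓ(ξ) be such that either k < ℓ, or k = ℓ and i - jℓ ≥ ℓ. Then ξ(i)^+ = ξ(i^+), i.e. applying the operation ξ ↦ ξ^+ to the partition ξ(i) yields the partition attached to the vertex i^+. -/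
/-- `resI r s` is the remainder of `s` upon division by `r` if `r ∤ s`, and equals `r`
if `r ∣ s`. -/
def resI (r s : ℤ) : ℤ := if r ∣ s then r else s % r

/-- `sI i j k` is `s(i)`, defined by `i - jk = r(i) + s(i)(k-1)`. -/
def sI (i j k : ℤ) : ℤ := (i - j * k - resI (k - 1) (i - j * k)) / (k - 1)

/-- The partition (multiset of parts) `ξ(i)` attached to a vertex `(i,j,k)`:
if `i - jk > 0` (equivalently `≠ 0` on `V_ℓ(ξ)`), it has one part `r(i)`, `s(i)` parts
`k-1`, `j + b_k` parts `k`, and `b_m` parts `m` for `k < m ≤ ℓ`; if `i = jk` (which on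
`V_ℓ(ξ)` forces `k = ℓ`), it has `b_ℓ + j` parts all equal to `ℓ`. -/
noncomputable def xiOf (ℓ : ℤ) (b : ℤ → ℤ) (i j k : ℤ) : Multiset ℤ :=
  if i - j * k = 0 then Multiset.replicate (b ℓ + j).toNat ℓ
  else
    {resI (k - 1) (i - j * k)} + Multiset.replicate (sI i j k).toNat (k - 1)
      + Multiset.replicate (j + b k).toNat k
      + ∑ m ∈ Finset.Icc (k + 1) ℓ, Multiset.replicate (b m).toNat m

/-- The operation `ξ ↦ ξ⁺` on partitions: if `ξ = (ξ_1 ≥ ⋯ ≥ ξ_s > 0)` with `s ≥ 2`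
parts, `ξ⁺` is obtained from `(ξ_1, …, ξ_{s-2}, ξ_{s-1}+1, ξ_s - 1)` by discarding a zero
entry; if `s ≤ 1` then `ξ⁺ = ξ`.  (Sorting ascendingly, `x` is the smallest part `ξ_s`
and `y` the second smallest part `ξ_{s-1}`.) -/
def plusOp (ξ : Multiset ℤ) : Multiset ℤ :=
  match ξ.sort (· ≤ ·) with
  | x :: y :: rest => (↑rest : Multiset ℤ) + {y + 1} + (if 0 < x - 1 then {x - 1} else 0)
  | _ => ξ

/-!
Write `i - jk = r + s(k-1)` with `1 ≤ r ≤ k-1`. Since `i - jk ≥ k`, we have `s ≥ 1`, so the two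
smallest parts of `ξ(i)` are `r` and `k-1`, and `ξ(i)⁺` trades them for `r-1` and `k`. In each case
of the definition of `i⁺ = (i', j', k')` the number `i' - j'k'` has an explicit decomposition of
the same kind: passing to `(i, j+1, k)` lowers `i - jk` by `k`, while for `(i + m·b_m, 0, m+1)`
minimality of `m` forces either `m = k`, or `i = k`, `j = 0` and `b_x = 0` for `k ≤ x < m`.
-/

theorem Int.exists_eq_add_mul_of_pos {c d : ℤ} (hc : 0 < c) (hd : 0 < d) :
    ∃ r s, 1 ≤ r ∧ r ≤ c ∧ 0 ≤ s ∧ d = r + s * c := by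
  refine ⟨(d - 1) % c + 1, (d - 1) / c, ?_, ?_, Int.ediv_nonneg (by omega) hc.le, ?_⟩
  · linarith [Int.emod_nonneg (d - 1) hc.ne']
  · linarith [Int.emod_lt_of_pos (d - 1) hc]
  · linarith [Int.emod_add_mul_ediv (d - 1) c]

theorem resI_add_mul {c r s : ℤ} (hr : 1 ≤ r) (hrc : r ≤ c) :
    resI c (r + s * c) = r := by
  unfold resI
  rcases hrc.eq_or_lt with rfl | hrc
  · simp
  · have hndvd : ¬ c ∣ r + s * c := fun hdvd =>
      absurd (Int.le_of_dvd (by omega) ((Int.dvd_add_left (dvd_mul_left c s)).mp hdvd))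
        (by omega)
    rw [if_neg hndvd, Int.add_mul_emod_self_right, Int.emod_eq_of_lt (by omega) hrc]

theorem Multiset.sort_cons_cons {α : Type*} [LinearOrder α] {x y : α} {t : Multiset α}
    (hxy : x ≤ y) (hyt : ∀ z ∈ t, y ≤ z) :
    (x ::ₘ y ::ₘ t).sort (· ≤ ·) = x :: y :: t.sort (· ≤ ·) := by
  rw [sort_cons _ _ _ (fun z hz => ?_), sort_cons _ _ _ hyt]
  rcases mem_cons.mp hz with rfl | hz
  exacts [hxy, hxy.trans (hyt z hz)]

theorem plusOp_cons_cons {x y : ℤ} {t : Multiset ℤ} (hxy : x ≤ y) (hyt : ∀ z ∈ t, y ≤ z) :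
    plusOp (x ::ₘ y ::ₘ t) = t + {y + 1} + (if 0 < x - 1 then {x - 1} else 0) := by
  simp only [plusOp, Multiset.sort_cons_cons hxy hyt, Multiset.sort_eq]

noncomputable def partsFrom (b : ℤ → ℤ) (a ℓ : ℤ) : Multiset ℤ :=
  ∑ m ∈ Finset.Icc a ℓ, Multiset.replicate (b m).toNat m

theorem le_of_mem_partsFrom {b : ℤ → ℤ} {a ℓ z : ℤ} (hz : z ∈ partsFrom b a ℓ) : a ≤ z := by
  obtain ⟨m, hm, hzm⟩ := Multiset.mem_sum.mp hz
  rw [Multiset.eq_of_mem_replicate hzm]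
  exact (Finset.mem_Icc.mp hm).1

theorem partsFrom_eq_replicate_add {b : ℤ → ℤ} {a ℓ : ℤ} (h : a ≤ ℓ) :
    partsFrom b a ℓ = Multiset.replicate (b a).toNat a + partsFrom b (a + 1) ℓ := by
  have hIcc : Finset.Icc a ℓ = insert a (Finset.Icc (a + 1) ℓ) := by
    ext x
    simp only [Finset.mem_Icc, Finset.mem_insert]
    omega
  rw [partsFrom, partsFrom, hIcc, Finset.sum_insert (by simp)]

theorem partsFrom_of_lt {b : ℤ → ℤ} {a ℓ : ℤ} (h : ℓ < a) : partsFrom b a ℓ = 0 := by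
  rw [partsFrom, Finset.Icc_eq_empty_of_lt h, Finset.sum_empty]

theorem partsFrom_eq_of_eq_zero {b : ℤ → ℤ} {a c ℓ : ℤ} (hac : a ≤ c)
    (hb : ∀ x, a ≤ x → x < c → b x = 0) : partsFrom b a ℓ = partsFrom b c ℓ := by
  refine (Finset.sum_subset (Finset.Icc_subset_Icc_left hac) fun x hx hxc => ?_).symm
  simp only [Finset.mem_Icc] at hx hxc
  simp [hb x hx.1 (by omega)]

theorem Multiset.replicate_toNat_eq_singleton_add {α : Type*} {m n : ℤ} (hmn : m = n + 1)
    (hn : 0 ≤ n) (a : α) : replicate m.toNat a = {a} + replicate n.toNat a := by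
  rw [show m.toNat = n.toNat + 1 by omega, replicate_succ, singleton_add]

section xiOf

variable {ℓ : ℤ} {b : ℤ → ℤ} {i j k : ℤ}

theorem xiOf_eq_of_eq_add_mul {r s : ℤ} (hr : 1 ≤ r) (hrk : r ≤ k - 1) (hs : 0 ≤ s)
    (hd : i - j * k = r + s * (k - 1)) :
    xiOf ℓ b i j k = {r} + Multiset.replicate s.toNat (k - 1)
      + Multiset.replicate (j + b k).toNat k + partsFrom b (k + 1) ℓ := by
  have hres : resI (k - 1) (i - j * k) = r := hd ▸ resI_add_mul hr hrk
  have hsI : sI i j k = s := by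
    rw [sI, hres, hd, add_sub_cancel_left, Int.mul_ediv_cancel _ (by omega)]
  rw [xiOf, if_neg (by nlinarith), hres, hsI, partsFrom]

theorem plusOp_xiOf_eq {r s : ℤ} (hr : 1 ≤ r) (hrk : r ≤ k - 1) (hs : 1 ≤ s)
    (hd : i - j * k = r + s * (k - 1)) :
    plusOp (xiOf ℓ b i j k) = Multiset.replicate (s - 1).toNat (k - 1)
      + Multiset.replicate (j + b k).toNat k + partsFrom b (k + 1) ℓ + {k}
      + (if 0 < r - 1 then {r - 1} else 0) := by
  set tail := Multiset.replicate (s - 1).toNat (k - 1) + Multiset.replicate (j + b k).toNat k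
    + partsFrom b (k + 1) ℓ
  have htail : ∀ z ∈ tail, k - 1 ≤ z := by
    intro z hz
    rcases Multiset.mem_add.mp hz with hz | hz
    · rcases Multiset.mem_add.mp hz with hz | hz <;> rw [Multiset.eq_of_mem_replicate hz]
      omega
    · linarith [le_of_mem_partsFrom hz]
  have hxi : xiOf ℓ b i j k = r ::ₘ (k - 1) ::ₘ tail := by
    rw [xiOf_eq_of_eq_add_mul hr hrk (by omega) hd,
      Multiset.replicate_toNat_eq_singleton_add (n := s - 1) (by ring) (by omega)]
    simp only [tail, ← Multiset.singleton_add]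
    abel
  rw [hxi, plusOp_cons_cons hrk htail, sub_add_cancel]

theorem plusOp_xiOf_eq_xiOf_succ_j (hk : 2 ≤ k) (hj : 0 ≤ j) (hbk : 0 ≤ b k)
    (hd : k < i - j * k) : plusOp (xiOf ℓ b i j k) = xiOf ℓ b i (j + 1) k := by
  obtain ⟨r, s, hr, hrk, hs, hdrs⟩ :=
    Int.exists_eq_add_mul_of_pos (by omega : 0 < k - 1) (by omega : 0 < i - j * k)
  have hs1 : 1 ≤ s := by nlinarith
  have hsucc := Multiset.replicate_toNat_eq_singleton_add (m := j + 1 + b k) (n := j + b k)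
    (by ring) (by omega) k
  rw [plusOp_xiOf_eq hr hrk hs1 hdrs]
  rcases hr.eq_or_lt with rfl | hr
  · have hs2 : 2 ≤ s := by nlinarith
    rw [xiOf_eq_of_eq_add_mul (r := k - 1) (s := s - 2) (by omega) le_rfl (by omega)
      (by linear_combination hdrs), hsucc, if_neg (by norm_num),
      Multiset.replicate_toNat_eq_singleton_add (m := s - 1) (n := s - 2) (by ring) (by omega)]
    abel
  · rw [xiOf_eq_of_eq_add_mul (r := r - 1) (s := s - 1) (by omega) (by omega) (by omega)
      (by linear_combination hdrs), hsucc, if_pos (by omega)]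
    abel

theorem plusOp_xiOf_eq_xiOf_succ_j_of_sub_eq (hℓ : 2 ≤ ℓ) (hj : 0 ≤ j) (hbℓ : 0 ≤ b ℓ)
    (hd : i - j * ℓ = ℓ) : plusOp (xiOf ℓ b i j ℓ) = xiOf ℓ b i (j + 1) ℓ := by
  rw [plusOp_xiOf_eq (r := 1) (s := 1) le_rfl (by omega) le_rfl (by linear_combination hd),
    if_neg (by norm_num), xiOf, if_pos (by linear_combination hd), partsFrom_of_lt (lt_add_one ℓ),
    Multiset.replicate_toNat_eq_singleton_add (m := b ℓ + (j + 1)) (n := j + b ℓ) (by ring)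
      (by omega), sub_self, Int.toNat_zero, Multiset.replicate_zero]
  abel

theorem plusOp_xiOf_eq_xiOf_succ_k (hk : 2 ≤ k) (hkℓ : k < ℓ) (hj : 0 ≤ j) (hbk : 0 ≤ b k)
    (hd : k ≤ i - j * k) (hd2 : i - j * k < 2 * k) :
    plusOp (xiOf ℓ b i j k) = xiOf ℓ b (i + k * b k) 0 (k + 1) := by
  obtain ⟨r, s, hr, hrk, hs, hdrs⟩ :=
    Int.exists_eq_add_mul_of_pos (by omega : 0 < k - 1) (by omega : 0 < i - j * k)
  have hs1 : 1 ≤ s := by nlinarith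
  have hs2 : s ≤ 2 := by nlinarith
  have hsucc := Multiset.replicate_toNat_eq_singleton_add (m := j + b k + 1) (n := j + b k)
    rfl (by omega) k
  rw [plusOp_xiOf_eq hr hrk hs1 hdrs, partsFrom_eq_replicate_add (a := k + 1) (by omega)]
  rcases (by omega : s = 1 ∨ s = 2) with rfl | rfl
  · rcases hr.eq_or_lt with rfl | hr
    · rw [xiOf_eq_of_eq_add_mul (r := k) (s := j + b k) (by omega) (by omega) (by omega)
        (by linear_combination hdrs), if_neg (by norm_num)]
      simp only [sub_self, add_sub_cancel_right, zero_add, Int.toNat_zero,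
        Multiset.replicate_zero]
      abel
    · rw [xiOf_eq_of_eq_add_mul (r := r - 1) (s := j + b k + 1) (by omega) (by omega)
        (by omega) (by linear_combination hdrs), if_pos (by omega), add_sub_cancel_right, hsucc]
      simp only [sub_self, zero_add, Int.toNat_zero, Multiset.replicate_zero]
      abel
  · obtain rfl : r = 1 := by linarith
    rw [xiOf_eq_of_eq_add_mul (r := k - 1) (s := j + b k + 1) (by omega) (by omega)
      (by omega) (by linear_combination hdrs), if_neg (by norm_num), add_sub_cancel_right, hsucc]
    rw [Multiset.replicate_toNat_eq_singleton_add (m := 2 - 1) (n := 0) (by norm_num) le_rfl]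
    simp only [zero_add, Int.toNat_zero, Multiset.replicate_zero, add_zero]
    abel

theorem plusOp_xiOf_eq_xiOf_of_gap {m : ℤ} (hk : 2 ≤ k) (hkm : k < m) (hmℓ : m < ℓ)
    (hbm : 0 ≤ b m) (hgap : ∀ x, k ≤ x → x < m → b x = 0) :
    plusOp (xiOf ℓ b k 0 k) = xiOf ℓ b (k + m * b m) 0 (m + 1) := by
  rw [plusOp_xiOf_eq (r := 1) (s := 1) le_rfl (by omega) le_rfl (by ring),
    xiOf_eq_of_eq_add_mul (r := k) (s := b m) (by omega) (by omega) hbm (by ring),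
    hgap k le_rfl hkm, partsFrom_eq_of_eq_zero (c := m) (by omega) fun x hx => hgap x (by omega),
    partsFrom_eq_replicate_add hmℓ.le, partsFrom_eq_replicate_add (a := m + 1) (by omega),
    if_neg (by norm_num)]
  simp only [sub_self, add_sub_cancel_right, zero_add, Int.toNat_zero, Multiset.replicate_zero]
  abel

end xiOf

section Vset

variable {ℓ : ℤ} {b : ℤ → ℤ} {i j k m : ℤ}

theorem mem_Vset_succ (hb : ∀ x, 0 ≤ b x) (hv : (i, j, k) ∈ Vset ℓ b) (hkm : k ≤ m)
    (hmℓ : m + 1 < ℓ) (hm : m + 1 ≤ i + m * b m) : (i + m * b m, 0, m + 1) ∈ Vset ℓ b := by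
  simp only [Vset, Set.mem_ofPred_eq] at hv ⊢
  obtain ⟨-, -, hk, -, hile, -⟩ := hv
  have hIcc : Finset.Icc 1 (m + 1 - 1) = insert m (Finset.Icc 1 (m - 1)) := by
    ext x
    simp only [Finset.mem_Icc, Finset.mem_insert]
    omega
  have hmono : ∑ x ∈ Finset.Icc 1 (k - 1), x * b x ≤ ∑ x ∈ Finset.Icc 1 (m - 1), x * b x :=
    Finset.sum_le_sum_of_subset_of_nonneg (Finset.Icc_subset_Icc_right (by omega))
      fun x hx _ => mul_nonneg (by linarith [(Finset.mem_Icc.mp hx).1]) (hb x)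
  rw [hIcc, Finset.sum_insert (by simp), if_neg (by omega)]
  refine ⟨by omega, le_rfl, by omega, by omega, by linarith, by linarith⟩

theorem le_of_lt_minimal (hb : ∀ x, 0 ≤ b x) (hv : (i, j, k) ∈ Vset ℓ b) (hmℓ : m < ℓ)
    (hmin : ∀ m', k ≤ m' → m' < ℓ → (i + m' * b m', 0, m' + 1) ∈ Vset ℓ b → m ≤ m')
    {x : ℤ} (hkx : k ≤ x) (hxm : x < m) : i + x * b x ≤ x := by
  by_contra! hx
  have := hmin x hkx (by omega) (mem_Vset_succ hb hv hkx (by omega) hx)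
  omega

end Vset

theorem stmt6_general (ℓ : ℤ) (b : ℤ → ℤ) (hb : ∀ m, 0 ≤ b m)
    (i j k : ℤ) (hv : (i, j, k) ∈ Vset ℓ b)
    (h : k < ℓ ∨ (k = ℓ ∧ ℓ ≤ i - j * ℓ))
    (i' j' k' : ℤ)
    (hplus :
      (i - j * k ≥ k * (2 - if k = ℓ then 1 else 0) ∧ (i', j', k') = (i, j + 1, k)) ∨
      (¬ (i - j * k ≥ k * (2 - if k = ℓ then 1 else 0)) ∧
        ∃ m : ℤ, k ≤ m ∧ m < ℓ ∧ (i', j', k') = (i + m * b m, 0, m + 1) ∧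
          (i + m * b m, 0, m + 1) ∈ Vset ℓ b ∧
          ∀ m' : ℤ, k ≤ m' → m' < ℓ → (i + m' * b m', 0, m' + 1) ∈ Vset ℓ b → m ≤ m')) :
    plusOp (xiOf ℓ b i j k) = xiOf ℓ b i' j' k' := by
  obtain ⟨-, hj, hk, -, -, hdv⟩ : 0 ≤ i ∧ 0 ≤ j ∧ 2 ≤ k ∧ k ≤ ℓ ∧ _ ∧
      i - j * k ≥ k * (1 - if k = ℓ then 1 else 0) := id hv
  have hdk : k ≤ i - j * k := by
    rcases h with h | ⟨rfl, h⟩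
    · simpa [h.ne] using hdv
    · exact h
  rcases hplus with ⟨hge, heq⟩ | ⟨hlt, m, hkm, hmℓ, heq, -, hmin⟩
  · obtain ⟨rfl, rfl, rfl⟩ : i = i' ∧ j + 1 = j' ∧ k = k' := by simpa using heq.symm
    rcases hdk.lt_or_eq with hd | hd
    · exact plusOp_xiOf_eq_xiOf_succ_j hk hj (hb k) hd
    · obtain rfl : k = ℓ := by
        by_contra hne
        rw [if_neg hne] at hge
        omega
      exact plusOp_xiOf_eq_xiOf_succ_j_of_sub_eq hk hj (hb k) hd.symm
  · obtain ⟨rfl, rfl, rfl⟩ : i + m * b m = i' ∧ 0 = j' ∧ m + 1 = k' := by simpa using heq.symm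
    have hkℓ : k < ℓ := by
      by_contra hkℓ
      rw [if_pos (by omega)] at hlt
      omega
    rw [if_neg hkℓ.ne] at hlt
    rcases hkm.eq_or_lt with rfl | hkm
    · exact plusOp_xiOf_eq_xiOf_succ_k hk hkℓ hj (hb k) hdk (by linarith)
    · have hgap x (hkx : k ≤ x) (hxm : x < m) := le_of_lt_minimal hb hv hmℓ hmin hkx hxm
      have hik := hgap k le_rfl hkm
      obtain ⟨rfl, rfl⟩ : i = k ∧ j = 0 := by constructor <;> nlinarith [hb k]
      exact plusOp_xiOf_eq_xiOf_of_gap hk hkm hmℓ (hb m) fun x hkx hxm => by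
        nlinarith [hgap x hkx hxm, hb x]

/-- Let `ℓ ≥ 2`, `b_1, …, b_ℓ ≥ 0`, and `(i,j,k) ∈ V_ℓ(ξ)` with either
`k < ℓ`, or `k = ℓ` and `i - jℓ ≥ ℓ`.  If `(i',j',k')` is the vertex `i⁺`, i.e. either
`i - jk ≥ k(2 - δ_{k,ℓ})` and `(i',j',k') = (i, j+1, k)`, or `i - jk < k(2 - δ_{k,ℓ})`
and `(i',j',k') = (i + m·b_m, 0, m+1)` for the minimal `k ≤ m < ℓ` with
`(i + m·b_m, 0, m+1) ∈ V_ℓ(ξ)`, then `ξ(i)⁺ = ξ(i⁺)`. -/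
theorem stmt6 (ℓ : ℤ) (hℓ : 2 ≤ ℓ) (b : ℤ → ℤ) (hb : ∀ m, 0 ≤ b m)
    (i j k : ℤ) (hv : (i, j, k) ∈ Vset ℓ b)
    (h : k < ℓ ∨ (k = ℓ ∧ ℓ ≤ i - j * ℓ))
    (i' j' k' : ℤ)
    (hplus :
      (i - j * k ≥ k * (2 - if k = ℓ then 1 else 0) ∧ (i', j', k') = (i, j + 1, k)) ∨
      (¬ (i - j * k ≥ k * (2 - if k = ℓ then 1 else 0)) ∧
        ∃ m : ℤ, k ≤ m ∧ m < ℓ ∧ (i', j', k') = (i + m * b m, 0, m + 1) ∧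
          (i + m * b m, 0, m + 1) ∈ Vset ℓ b ∧
          ∀ m' : ℤ, k ≤ m' → m' < ℓ → (i + m' * b m', 0, m' + 1) ∈ Vset ℓ b → m ≤ m')) :
    plusOp (xiOf ℓ b i j k) = xiOf ℓ b i' j' k' :=
  stmt6_general ℓ b hb i j k hv h i' j' k' hplus
end

section
/- Let ℓ ≥ 2 and let b_1, …, b_ℓ ≥ 0 be integers. The assignment i ↦ ξ(i), sending a vertex of V_ℓ(ξ) to its attached partition, is injective. -/
/-!
The vertex `(i, j, k)` is read back off `ξ(i)` one coordinate at a time. A vertex with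
`i - jk > 0` has a part `r(i) ≤ k - 1 < ℓ`, so it cannot share its partition with a vertex
with `i = jℓ`, all of whose parts equal `ℓ`. Between two vertices of the first kind with
`k < k'`, the first has at least two parts below `k' - 1` (namely `r(i)` and, as `i - jk ≥ k`,
a part `k - 1`) while the second has at most one (namely `r(i')`); hence `k` is determined.
The parts sum to `i + ∑_{m=k}^{ℓ} m b_m`, which gives `i`, and then `j` is the multiplicity
of `k` minus `b_k` (or `i / ℓ` when `i = jℓ`).
-/

section

variable {ℓ : ℤ} {b : ℤ → ℤ} {i j k i' j' k' : ℤ}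

lemma resI_le {m : ℤ} (hm : 0 < m) (n : ℤ) : resI m n ≤ m := by
  unfold resI
  split_ifs
  · exact le_rfl
  · exact (Int.emod_lt_of_pos n hm).le

lemma dvd_sub_resI (m n : ℤ) : m ∣ n - resI m n := by
  unfold resI
  split_ifs with hdvd
  · exact dvd_sub hdvd dvd_rfl
  · exact Int.dvd_self_sub_emod

lemma resI_add_sI_mul (i j k : ℤ) :
    resI (k - 1) (i - j * k) + sI i j k * (k - 1) = i - j * k := by
  rw [sI, Int.ediv_mul_cancel (dvd_sub_resI _ _)]
  ring

lemma sI_nonneg (hk : 2 ≤ k) (hn : 0 < i - j * k) : 0 ≤ sI i j k := by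
  have := resI_add_sI_mul i j k
  have := resI_le (show 0 < k - 1 by omega) (i - j * k)
  nlinarith

lemma one_le_sI (hk : 2 ≤ k) (hn : k ≤ i - j * k) : 1 ≤ sI i j k := by
  have := resI_add_sI_mul i j k
  have := resI_le (show 0 < k - 1 by omega) (i - j * k)
  nlinarith

lemma sub_mul_nonneg_of_mem_Vset (hv : (i, j, k) ∈ Vset ℓ b) : 0 ≤ i - j * k := by
  obtain ⟨-, -, hk, -, -, hn⟩ := hv
  dsimp only at hk hn
  split_ifs at hn <;> omega

lemma le_sub_mul_of_mem_Vset (hv : (i, j, k) ∈ Vset ℓ b) (hkℓ : k < ℓ) :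
    k ≤ i - j * k := by
  obtain ⟨-, -, -, -, -, hn⟩ := hv
  dsimp only at hn
  rwa [if_neg hkℓ.ne, sub_zero, mul_one] at hn

lemma eq_of_mem_Vset_of_sub_mul_eq_zero (hv : (i, j, k) ∈ Vset ℓ b) (h : i - j * k = 0) :
    k = ℓ := by
  by_contra hkℓ
  have hk : 2 ≤ k := hv.2.2.1
  have := le_sub_mul_of_mem_Vset hv (lt_of_le_of_ne hv.2.2.2.1 hkℓ)
  omega

lemma lt_of_mem_sum_replicate_Icc {k ℓ a : ℤ} {f : ℤ → ℕ}
    (ha : a ∈ ∑ m ∈ Finset.Icc (k + 1) ℓ, Multiset.replicate (f m) m) : k < a := by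
  obtain ⟨m, hm, ham⟩ := Multiset.mem_sum.1 ha
  rw [Multiset.eq_of_mem_replicate ham]
  exact (Finset.mem_Icc.1 hm).1

lemma xiOf_of_sub_mul_eq_zero (h : i - j * k = 0) :
    xiOf ℓ b i j k = Multiset.replicate (b ℓ + j).toNat ℓ :=
  if_pos h

lemma resI_mem_xiOf (h : i - j * k ≠ 0) : resI (k - 1) (i - j * k) ∈ xiOf ℓ b i j k := by
  rw [xiOf, if_neg h]
  simp only [Multiset.mem_add, Multiset.mem_singleton, true_or]

lemma count_self_xiOf (hk : 2 ≤ k) (h : i - j * k ≠ 0) :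
    Multiset.count k (xiOf ℓ b i j k) = (j + b k).toNat := by
  have hr := resI_le (show 0 < k - 1 by omega) (i - j * k)
  have htail : Multiset.count k
      (∑ m ∈ Finset.Icc (k + 1) ℓ, Multiset.replicate (b m).toNat m) = 0 :=
    Multiset.count_eq_zero.2 fun hk' => (lt_of_mem_sum_replicate_Icc hk').false
  rw [xiOf, if_neg h]
  simp only [Multiset.count_add, Multiset.count_singleton, Multiset.count_replicate, htail]
  split_ifs <;> omega

lemma countP_lt_pred_xiOf_le_one (h : i - j * k ≠ 0) :
    Multiset.countP (· < k - 1) (xiOf ℓ b i j k) ≤ 1 := by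
  rw [xiOf, if_neg h, add_assoc, add_assoc, Multiset.singleton_add, Multiset.countP_cons,
    Multiset.countP_eq_zero.2]
  · split_ifs <;> omega
  rintro a ha
  rcases Multiset.mem_add.1 ha with ha | ha
  · rw [Multiset.eq_of_mem_replicate ha]
    omega
  rcases Multiset.mem_add.1 ha with ha | ha
  · rw [Multiset.eq_of_mem_replicate ha]
    omega
  · have := lt_of_mem_sum_replicate_Icc ha
    omega

lemma two_le_countP_lt_xiOf (hk : 2 ≤ k) (hn : k ≤ i - j * k) {c : ℤ} (hc : k ≤ c) :
    2 ≤ Multiset.countP (· < c) (xiOf ℓ b i j k) := by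
  have hs := one_le_sI hk hn
  have hr := resI_le (show 0 < k - 1 by omega) (i - j * k)
  set head := {resI (k - 1) (i - j * k)} + Multiset.replicate (sI i j k).toNat (k - 1)
  calc 2 ≤ Multiset.card head := by
        simp only [head, Multiset.card_add, Multiset.card_singleton, Multiset.card_replicate]
        omega
    _ = Multiset.countP (· < c) head := by
      refine (Multiset.countP_eq_card.2 ?_).symm
      simp only [head, Multiset.mem_add, Multiset.mem_singleton, Multiset.mem_replicate]
      rintro a (rfl | ⟨-, rfl⟩) <;> omega
    _ ≤ Multiset.countP (· < c) (xiOf ℓ b i j k) := by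
      rw [xiOf, if_neg (by omega)]
      exact Multiset.countP_le_of_le _
        ((Multiset.le_add_right _ _).trans (Multiset.le_add_right _ _))

lemma sum_xiOf (hb : ∀ m, 0 ≤ b m) (hv : (i, j, k) ∈ Vset ℓ b) :
    (xiOf ℓ b i j k).sum = i + ∑ m ∈ Finset.Icc k ℓ, m * b m := by
  have hj : 0 ≤ j := hv.2.1
  have hk : 2 ≤ k := hv.2.2.1
  by_cases h : i - j * k = 0
  · obtain rfl := eq_of_mem_Vset_of_sub_mul_eq_zero hv h
    rw [xiOf_of_sub_mul_eq_zero h, Multiset.sum_replicate, Finset.Icc_self, Finset.sum_singleton,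
      nsmul_eq_mul, Int.toNat_of_nonneg (by linarith [hb k])]
    linarith
  · have hs := sI_nonneg hk (lt_of_le_of_ne (sub_mul_nonneg_of_mem_Vset hv) (Ne.symm h))
    have := resI_add_sI_mul i j k
    have htail : (∑ m ∈ Finset.Icc (k + 1) ℓ, Multiset.replicate (b m).toNat m).sum =
        ∑ m ∈ Finset.Icc (k + 1) ℓ, m * b m := by
      rw [Multiset.sum_sum]
      refine Finset.sum_congr rfl fun m _ => ?_
      rw [Multiset.sum_replicate, nsmul_eq_mul, Int.toNat_of_nonneg (hb m), mul_comm]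
    rw [xiOf, if_neg h, ← Finset.add_sum_Ioc_eq_sum_Icc hv.2.2.2.1,
      ← Finset.Icc_add_one_left_eq_Ioc]
    simp only [Multiset.sum_add, Multiset.sum_singleton, Multiset.sum_replicate, nsmul_eq_mul,
      Int.toNat_of_nonneg hs, Int.toNat_of_nonneg (add_nonneg hj (hb k)), htail]
    linarith

lemma xiOf_ne_replicate (hv : (i, j, k) ∈ Vset ℓ b) (h : i - j * k ≠ 0) (n : ℕ) :
    xiOf ℓ b i j k ≠ Multiset.replicate n ℓ := by
  intro heq
  have hr := Multiset.eq_of_mem_replicate (heq ▸ resI_mem_xiOf h)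
  have hk : 2 ≤ k := hv.2.2.1
  have hkℓ : k ≤ ℓ := hv.2.2.2.1
  have := resI_le (show 0 < k - 1 by omega) (i - j * k)
  omega

lemma sub_mul_eq_zero_iff_of_xiOf_eq (hv : (i, j, k) ∈ Vset ℓ b)
    (hv' : (i', j', k') ∈ Vset ℓ b) (heq : xiOf ℓ b i j k = xiOf ℓ b i' j' k') :
    i - j * k = 0 ↔ i' - j' * k' = 0 := by
  constructor <;> intro h <;> by_contra h'
  · exact xiOf_ne_replicate hv' h' _ (heq ▸ xiOf_of_sub_mul_eq_zero h)
  · exact xiOf_ne_replicate hv h' _ (heq.symm ▸ xiOf_of_sub_mul_eq_zero h)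

lemma not_lt_of_xiOf_eq (hv : (i, j, k) ∈ Vset ℓ b) (hv' : (i', j', k') ∈ Vset ℓ b)
    (h' : i' - j' * k' ≠ 0) (heq : xiOf ℓ b i j k = xiOf ℓ b i' j' k') : ¬k < k' := by
  intro hlt
  have hn := le_sub_mul_of_mem_Vset hv (hlt.trans_le hv'.2.2.2.1)
  have hlower :=
    two_le_countP_lt_xiOf (ℓ := ℓ) (b := b) hv.2.2.1 hn (show k ≤ k' - 1 by omega)
  have hupper := countP_lt_pred_xiOf_le_one (ℓ := ℓ) (b := b) h'
  rw [heq] at hlower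
  omega

lemma k_eq_of_xiOf_eq (hv : (i, j, k) ∈ Vset ℓ b) (hv' : (i', j', k') ∈ Vset ℓ b)
    (heq : xiOf ℓ b i j k = xiOf ℓ b i' j' k') : k = k' := by
  have hiff := sub_mul_eq_zero_iff_of_xiOf_eq hv hv' heq
  by_cases h : i - j * k = 0
  · rw [eq_of_mem_Vset_of_sub_mul_eq_zero hv h, eq_of_mem_Vset_of_sub_mul_eq_zero hv' (hiff.1 h)]
  · exact le_antisymm (not_lt.1 (not_lt_of_xiOf_eq hv' hv h heq.symm))
      (not_lt.1 (not_lt_of_xiOf_eq hv hv' (mt hiff.2 h) heq))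

lemma j_eq_of_xiOf_eq (hb : ∀ m, 0 ≤ b m) (hv : (i, j, k) ∈ Vset ℓ b)
    (hv' : (i, j', k) ∈ Vset ℓ b) (heq : xiOf ℓ b i j k = xiOf ℓ b i j' k) : j = j' := by
  have hk : 2 ≤ k := hv.2.2.1
  by_cases h : i - j * k = 0
  · have h' := (sub_mul_eq_zero_iff_of_xiOf_eq hv hv' heq).1 h
    exact mul_right_cancel₀ (show k ≠ 0 by omega) (by linarith)
  · have h' : i - j' * k ≠ 0 := mt (sub_mul_eq_zero_iff_of_xiOf_eq hv hv' heq).2 h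
    have hcount := congrArg (Multiset.count k) heq
    rw [count_self_xiOf hk h, count_self_xiOf hk h'] at hcount
    have := hb k
    have : 0 ≤ j := hv.2.1
    have : 0 ≤ j' := hv'.2.1
    omega

end

theorem stmt8_general (ℓ : ℤ) (b : ℤ → ℤ) (hb : ∀ m, 0 ≤ b m) :
    Set.InjOn (fun v : ℤ × ℤ × ℤ => xiOf ℓ b v.1 v.2.1 v.2.2) (Vset ℓ b) := by
  rintro ⟨i, j, k⟩ hv ⟨i', j', k'⟩ hv' (heq : xiOf ℓ b i j k = xiOf ℓ b i' j' k')
  obtain rfl : k = k' := k_eq_of_xiOf_eq hv hv' heq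
  obtain rfl : i = i' := by
    simpa only [sum_xiOf hb hv, sum_xiOf hb hv', add_left_inj] using congrArg Multiset.sum heq
  obtain rfl : j = j' := j_eq_of_xiOf_eq hb hv hv' heq
  rfl

/-- Let `ℓ ≥ 2` and `b_1, …, b_ℓ ≥ 0`.  The assignment `i ↦ ξ(i)`, sending
a vertex of `V_ℓ(ξ)` to its attached partition, is injective. -/
theorem stmt8 (ℓ : ℤ) (hℓ : 2 ≤ ℓ) (b : ℤ → ℤ) (hb : ∀ m, 0 ≤ b m) :
    Set.InjOn (fun v : ℤ × ℤ × ℤ => xiOf ℓ b v.1 v.2.1 v.2.2) (Vset ℓ b) :=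
  stmt8_general ℓ b hb
end

section
/- For all integers s ≥ 0: p_{4s,0}(q) = q^{2s²} and p_{4s+2,0}(q) = 0 in ℤ[q]. Equivalently, the generating series P₀(q,u) = Σ_{s≥0} p_{2s,0}(q)u^s equals Θ(q²,u²), where Θ(q,u) = Σ_{s≥0} q^{s²}u^s is the partial theta series. -/
open scoped PowerSeries

/-- The polynomials `p_{s,r}(q) ∈ ℤ[q]` (the graded multiplicities
`[D(2,sω) : D(3,rω)]_q`): `p_{0,0} = p_{1,1} = p_{2,2} = 1`; `p_{s,r} = 0` whenever
`r > s`, or `s - r` is odd, or `s ≤ 2` and `(s,r) ∉ {(0,0),(1,1),(2,2)}`; and for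
`s ≥ 3` with `r ≤ s` and `s - r` even, writing `s = 2s₁ + s₀` with `s₀ ∈ {0,1}`,
`p_{s,r} = q^{(s-r)/2} p_{s-3,r-3} + q^{(s₁+s₀-1)(2-s₀)} p_{s-4+2s₀,r}` if `r ≥ 3`, and
`p_{s,r} = q^{(s₁+s₀-1)(2-s₀)} p_{s-4+2s₀,r}` if `0 ≤ r ≤ 2`. -/
noncomputable def pp : ℕ → ℕ → Polynomial ℤ
  | 0, r => if r = 0 then 1 else 0
  | 1, r => if r = 1 then 1 else 0
  | 2, r => if r = 2 then 1 else 0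
  | (s + 3), r =>
    if (s + 3) < r ∨ (s + 3) % 2 ≠ r % 2 then 0
    else
      (if 3 ≤ r then Polynomial.X ^ (((s + 3) - r) / 2) * pp s (r - 3) else 0)
        + Polynomial.X ^ (((s + 3) / 2 + (s + 3) % 2 - 1) * (2 - (s + 3) % 2))
            * pp ((s + 3) + 2 * ((s + 3) % 2) - 4) r
  termination_by s _ => s
  decreasing_by
  · omega
  · omega

/-- The generating series `P_m(q,u)`: for `m` even, `P_m(q,u) = Σ_{s≥0} p_{2s,m} u^s`;
for `m` odd, `P_m(q,u) = Σ_{s≥0} p_{2s+1,m} u^{s+1}`.  A formal power series in `u` with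
coefficients in `ℤ[q]`. -/
noncomputable def Pser (m : ℕ) : PowerSeries (Polynomial ℤ) :=
  PowerSeries.mk fun n =>
    if m % 2 = 0 then pp (2 * n) m else if n = 0 then 0 else pp (2 * n - 1) m

/-- `thetaSubst a c` is the substituted partial theta series `Θ(a, c·u²) ∈ ℤ[q]⟦u⟧`,
i.e. `Σ_{s≥0} a^{s²} c^s u^{2s}`, where `Θ(q,u) = Σ_{s≥0} q^{s²}u^s`. -/
noncomputable def thetaSubst (a c : Polynomial ℤ) : PowerSeries (Polynomial ℤ) :=
  PowerSeries.mk fun n => if n % 2 = 0 then a ^ ((n / 2) ^ 2) * c ^ (n / 2) else 0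

lemma pp_step (n : ℕ) : pp (2*n+4) 0 = Polynomial.X ^ (2*n+2) * pp (2*n) 0 := by
  show pp (2*n+1+3) 0 = _
  rw [pp]
  rw [if_neg (by omega), if_neg (by omega : ¬ (3:ℕ) ≤ 0), zero_add]
  have m2 : (2*n+1+3) % 2 = 0 := by omega
  have d2 : (2*n+1+3) / 2 = n + 2 := by omega
  rw [m2, d2]
  norm_num
  have e1 : (n+1)*2 = 2*n+2 := by ring
  have e2 : 2*n+1+3-4 = 2*n := by omega
  rw [e1, e2]

lemma pp_even (s : ℕ) : pp (4*s) 0 = Polynomial.X ^ (2*s^2) := by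
  induction s with
  | zero => simp [pp]
  | succ s ih =>
      have h : 4*(s+1) = 2*(2*s)+4 := by ring
      rw [h, pp_step]
      have h2 : 2*(2*s) = 4*s := by ring
      rw [h2, ih, ← pow_add]
      congr 1; ring

lemma pp_odd (s : ℕ) : pp (4*s+2) 0 = 0 := by
  induction s with
  | zero => simp [pp]
  | succ s ih =>
      have h : 4*(s+1)+2 = 2*(2*s+1)+4 := by ring
      rw [h, pp_step]
      have h2 : 2*(2*s+1) = 4*s+2 := by ring
      rw [h2, ih, mul_zero]

/-- For all integers `s ≥ 0`: `p_{4s,0}(q) = q^{2s²}` and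
`p_{4s+2,0}(q) = 0` in `ℤ[q]`.  Equivalently, the generating series
`P₀(q,u) = Σ_{s≥0} p_{2s,0}(q)u^s` equals `Θ(q², u²)`, where
`Θ(q,u) = Σ_{s≥0} q^{s²}u^s` is the partial theta series. -/
theorem stmt10 :
    (∀ s : ℕ, pp (4 * s) 0 = Polynomial.X ^ (2 * s ^ 2)) ∧
    (∀ s : ℕ, pp (4 * s + 2) 0 = 0) ∧
    Pser 0 = thetaSubst (Polynomial.X ^ 2) 1 := by
  have key : ∀ n : ℕ, pp (2*n) 0 =
      if n % 2 = 0 then (Polynomial.X ^ 2) ^ ((n/2)^2) * (1:Polynomial ℤ) ^ (n/2) else 0 := by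
    intro n
    rcases Nat.even_or_odd n with ⟨k, hk⟩ | ⟨k, hk⟩
    · have h1 : 2*n = 4*k := by omega
      have h2 : n % 2 = 0 := by omega
      have h3 : n / 2 = k := by omega
      rw [h1, pp_even, h2, if_pos rfl, h3, one_pow, mul_one, ← pow_mul]
    · have h1 : 2*n = 4*k+2 := by omega
      rw [h1, pp_odd, if_neg (by omega)]
  refine ⟨pp_even, pp_odd, ?_⟩
  ext n
  simp [Pser, thetaSubst, key n]
end

section
/- For all integers s ≥ 0: p_{2s+1,1}(q) = q^{s(s+1)/2} in ℤ[q]. Equivalently, the generating series P₁(q,u) = Σ_{s≥0} p_{2s+1,1}(q)u^{s+1} equals uΘ(q²,qu²) + qu²Θ(q²,q³u²), where Θ(q,u) = Σ_{s≥0} q^{s²}u^s is the partial theta series. -/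
open scoped PowerSeries

/-!
For `r = 1` the branch through `p_{s-3,r-3}` is absent, so `p_{2s+3,1} = q^{s+1} p_{2s+1,1}` and
`p_{2s+1,1} = q^{1+2+⋯+s}`. The series identity then splits by the parity of `s`: for `s = 2k`
the exponent is `2k² + k`, the `u^{2k+1}`-coefficient of `uΘ(q², qu²)`, and for `s = 2k+1` it is
`2k² + 3k + 1`, the `u^{2k+2}`-coefficient of `qu²Θ(q², q³u²)`.
-/

lemma pp_two_mul_add_three_one (s : ℕ) :
    pp (2 * s + 3) 1 = Polynomial.X ^ (s + 1) * pp (2 * s + 1) 1 := by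
  rw [pp, if_neg (by omega), if_neg (by omega), zero_add,
    show (2 * s + 3) / 2 + (2 * s + 3) % 2 - 1 = s + 1 by omega,
    show 2 - (2 * s + 3) % 2 = 1 by omega, mul_one,
    show 2 * s + 3 + 2 * ((2 * s + 3) % 2) - 4 = 2 * s + 1 by omega]

lemma succ_mul_succ_succ_div_two (s : ℕ) :
    (s + 1) * (s + 1 + 1) / 2 = s * (s + 1) / 2 + (s + 1) := by
  rw [show (s + 1) * (s + 1 + 1) = s * (s + 1) + (s + 1) * 2 by ring,
    Nat.add_mul_div_right _ _ two_pos]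

theorem pp_two_mul_add_one_one (s : ℕ) :
    pp (2 * s + 1) 1 = Polynomial.X ^ (s * (s + 1) / 2) := by
  induction s with
  | zero => simp [pp]
  | succ s ih => rw [mul_add_one, pp_two_mul_add_three_one, ih, ← pow_add,
      succ_mul_succ_succ_div_two, add_comm]

lemma coeff_zero_Pser_one : PowerSeries.coeff 0 (Pser 1) = 0 := by
  simp [Pser]

lemma coeff_succ_Pser_one (n : ℕ) :
    PowerSeries.coeff (n + 1) (Pser 1) = pp (2 * n + 1) 1 := by
  simp [Pser, show 2 * (n + 1) - 1 = 2 * n + 1 by omega]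

section thetaSubst

variable (a c : Polynomial ℤ)

lemma coeff_two_mul_thetaSubst (k : ℕ) :
    PowerSeries.coeff (2 * k) (thetaSubst a c) = a ^ (k ^ 2) * c ^ k := by
  simp [thetaSubst]

lemma coeff_thetaSubst_of_odd {n : ℕ} (hn : Odd n) :
    PowerSeries.coeff n (thetaSubst a c) = 0 := by
  simp [thetaSubst, Nat.odd_iff.mp hn]

lemma coeff_X_sq_mul_thetaSubst_of_odd {n : ℕ} (hn : Odd n) :
    PowerSeries.coeff n (PowerSeries.X ^ 2 * thetaSubst a c) = 0 := by
  rw [PowerSeries.coeff_X_pow_mul']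
  split_ifs with h
  · exact coeff_thetaSubst_of_odd a c (Nat.Odd.sub_even h hn even_two)
  · rfl

end thetaSubst

/-- For all integers `s ≥ 0`: `p_{2s+1,1}(q) = q^{s(s+1)/2}` in `ℤ[q]`.
Equivalently, the generating series `P₁(q,u) = Σ_{s≥0} p_{2s+1,1}(q)u^{s+1}` equals
`u·Θ(q², qu²) + qu²·Θ(q², q³u²)`, where `Θ(q,u) = Σ_{s≥0} q^{s²}u^s` is the partial
theta series. -/
theorem stmt11 :
    (∀ s : ℕ, pp (2 * s + 1) 1 = Polynomial.X ^ (s * (s + 1) / 2)) ∧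
    Pser 1 = PowerSeries.X * thetaSubst (Polynomial.X ^ 2) Polynomial.X
      + PowerSeries.C (R := Polynomial ℤ) Polynomial.X * PowerSeries.X ^ 2
          * thetaSubst (Polynomial.X ^ 2) (Polynomial.X ^ 3) := by
  refine ⟨pp_two_mul_add_one_one, PowerSeries.ext fun n => ?_⟩
  simp only [map_add, mul_assoc, PowerSeries.coeff_C_mul]
  obtain _ | n := n
  · simp [coeff_zero_Pser_one]
  obtain ⟨k, rfl | rfl⟩ := Nat.even_or_odd' n
  · rw [coeff_succ_Pser_one, pp_two_mul_add_one_one, PowerSeries.coeff_succ_X_mul,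
      coeff_two_mul_thetaSubst, coeff_X_sq_mul_thetaSubst_of_odd _ _ (odd_two_mul_add_one k),
      mul_zero, add_zero, ← pow_mul, ← pow_add,
      show 2 * k * (2 * k + 1) = (2 * k ^ 2 + k) * 2 by ring, Nat.mul_div_cancel _ two_pos,
      mul_comm]
  · rw [coeff_succ_Pser_one, pp_two_mul_add_one_one, PowerSeries.coeff_succ_X_mul,
      coeff_thetaSubst_of_odd _ _ (odd_two_mul_add_one k), zero_add,
      show (2 * k + 1) * (2 * k + 1 + 1) = (2 * k ^ 2 + 3 * k + 1) * 2 by ring,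
      Nat.mul_div_cancel _ two_pos, show 2 * k + 1 + 1 = 2 * k + 2 from rfl,
      PowerSeries.coeff_X_pow_mul, coeff_two_mul_thetaSubst]
    ring
end

section
/- For every integer r ≥ 2 one has the identity of formal power series in u over ℤ[q]: q^r·P_{2r}(q,u) = qu·P_{2r-3}(q,qu) + q^{r+2}u²·P_{2r}(q,q²u). Equivalently, comparing coefficients of u^s: q^r·p_{2s,2r}(q) = q^s·p_{2s-3,2r-3}(q) + q^{r+2s-2}·p_{2s-4,2r}(q) for all s ≥ 2, both right-hand terms with negative first index being interpreted as 0. -/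
open scoped PowerSeries

/-! For `s ≥ 2` and `r ≥ 2` (so that `2r ≥ 3`), the coefficient identity is the defining
recursion of `p_{2s,2r}` multiplied by `q^r`, or `0 = 0` when `s < r`; the series identity
is its generating-function form, the shift `u`, `u²` and the rescalings `qu`, `q²u` accounting
for the powers `q^s` and `q^{r+2s-2}`. -/

lemma pp_eq_zero_of_lt {s r : ℕ} (h : s < r) : pp s r = 0 := by
  match s with
  | 0 | 1 | 2 => rw [pp]; simp only [ite_eq_right_iff]; omega
  | s + 3 => rw [pp, if_pos (Or.inl h)]

lemma pp_two_mul_add_four {k r : ℕ} (hr : 2 ≤ r) (hrk : r ≤ k + 2) :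
    pp (2 * k + 4) (2 * r)
      = Polynomial.X ^ (k + 2 - r) * pp (2 * k + 1) (2 * r - 3)
        + Polynomial.X ^ (2 * k + 2) * pp (2 * k) (2 * r) := by
  rw [show 2 * k + 4 = 2 * k + 1 + 3 by ring, pp, if_neg (by omega), if_pos (by omega),
    show (2 * k + 1 + 3) % 2 = 0 by omega, show (2 * k + 1 + 3) / 2 = k + 2 by omega]
  congr 3 <;> omega

lemma X_pow_mul_pp_two_mul_add_four (k r : ℕ) (hr : 2 ≤ r) :
    Polynomial.X ^ r * pp (2 * k + 4) (2 * r)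
      = Polynomial.X ^ (k + 2) * pp (2 * k + 1) (2 * r - 3)
        + Polynomial.X ^ (r + 2 * k + 2) * pp (2 * k) (2 * r) := by
  rcases lt_or_ge (k + 2) r with hkr | hrk
  · simp [pp_eq_zero_of_lt (show 2 * k + 4 < 2 * r by omega),
      pp_eq_zero_of_lt (show 2 * k + 1 < 2 * r - 3 by omega),
      pp_eq_zero_of_lt (show 2 * k < 2 * r by omega)]
  · rw [pp_two_mul_add_four hr hrk, mul_add, ← mul_assoc, ← mul_assoc, ← pow_add, ← pow_add,
      Nat.add_sub_cancel' hrk, add_assoc]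

lemma coeff_Pser_two_mul (m n : ℕ) :
    PowerSeries.coeff n (Pser (2 * m)) = pp (2 * n) (2 * m) := by
  simp [Pser]

lemma coeff_zero_Pser_of_odd {m : ℕ} (hm : m % 2 = 1) : PowerSeries.coeff 0 (Pser m) = 0 := by
  simp [Pser, hm]

lemma coeff_succ_Pser_of_odd {m : ℕ} (hm : m % 2 = 1) (n : ℕ) :
    PowerSeries.coeff (n + 1) (Pser m) = pp (2 * n + 1) m := by
  simp [Pser, hm, Nat.mul_succ]

/-- For every integer `r ≥ 2`, in `ℤ[q]⟦u⟧`: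
`q^r·P_{2r}(q,u) = qu·P_{2r-3}(q,qu) + q^{r+2}u²·P_{2r}(q,q²u)`, where `P_m(q,cu)` is
the rescaled series whose `u^s`-coefficient is `c^s` times that of `P_m(q,u)`.
Equivalently, comparing coefficients of `u^s`:
`q^r·p_{2s,2r}(q) = q^s·p_{2s-3,2r-3}(q) + q^{r+2s-2}·p_{2s-4,2r}(q)` for all `s ≥ 2`. -/
theorem stmt13 (r : ℕ) (hr : 2 ≤ r) :
    (PowerSeries.C (R := Polynomial ℤ) Polynomial.X ^ r * Pser (2 * r)
      = PowerSeries.C (R := Polynomial ℤ) Polynomial.X * PowerSeries.X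
          * PowerSeries.rescale Polynomial.X (Pser (2 * r - 3))
        + PowerSeries.C (R := Polynomial ℤ) Polynomial.X ^ (r + 2) * PowerSeries.X ^ 2
            * PowerSeries.rescale (Polynomial.X ^ 2) (Pser (2 * r))) ∧
    ∀ s : ℕ, 2 ≤ s →
      Polynomial.X ^ r * pp (2 * s) (2 * r)
        = Polynomial.X ^ s * pp (2 * s - 3) (2 * r - 3)
          + Polynomial.X ^ (r + 2 * s - 2) * pp (2 * s - 4) (2 * r) := by
  have hodd : (2 * r - 3) % 2 = 1 := by omega
  refine ⟨PowerSeries.ext fun n => ?_, fun s hs => ?_⟩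
  · simp only [← map_pow, map_add, mul_assoc, PowerSeries.coeff_C_mul,
      mul_comm (PowerSeries.X ^ 2), PowerSeries.coeff_mul_X_pow',
      PowerSeries.coeff_rescale, coeff_Pser_two_mul]
    match n with
    | 0 => simp [pp_eq_zero_of_lt (show 0 < 2 * r by omega)]
    | 1 => simp [coeff_zero_Pser_of_odd hodd, pp_eq_zero_of_lt (show 2 < 2 * r by omega)]
    | k + 2 =>
      rw [show 2 * (k + 2) = 2 * k + 4 by ring, PowerSeries.coeff_succ_X_mul,
        PowerSeries.coeff_rescale, coeff_succ_Pser_of_odd hodd, if_pos (by omega),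
        Nat.add_sub_cancel, X_pow_mul_pp_two_mul_add_four k r hr]
      ring
  · obtain ⟨k, rfl⟩ : ∃ k, s = k + 2 := ⟨s - 2, by omega⟩
    rw [show 2 * (k + 2) = 2 * k + 4 by ring, show 2 * k + 4 - 3 = 2 * k + 1 by omega,
      show 2 * k + 4 - 4 = 2 * k by omega, show r + (2 * k + 4) - 2 = r + 2 * k + 2 by omega]
    exact X_pow_mul_pp_two_mul_add_four k r hr
end

section
/- For every integer r ≥ 2 one has the identity of formal power series in ℤ[[u]]: (1 - u²)·P_{2r}(1,u) = u·P_{2r-3}(1,u), where P_m(1,u) is obtained from P_m(q,u) by evaluating each coefficient at q = 1. -/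
open scoped PowerSeries

/-- `P_m(1,u) ∈ ℤ⟦u⟧`, obtained from `P_m(q,u)` by evaluating each coefficient at
`q = 1`. -/
noncomputable def Pone (m : ℕ) : PowerSeries ℤ :=
  PowerSeries.map (Polynomial.evalRingHom (1 : ℤ)) (Pser m)

lemma pp_eq_zero (s r : ℕ) (h : s < r) : pp s r = 0 := by
  match s with
  | 0 => rw [pp]; simp; omega
  | 1 => rw [pp]; simp; omega
  | 2 => rw [pp]; simp; omega
  | s + 3 => rw [pp, if_pos (Or.inl h)]

lemma key (n r : ℕ) (hn : 2 ≤ n) (hr : 2 ≤ r) :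
    (pp (2*n) (2*r)).eval 1 =
      (pp (2*n-3) (2*r-3)).eval 1 + (pp (2*n-4) (2*r)).eval 1 := by
  obtain ⟨s, hs⟩ : ∃ s, 2*n = s + 3 := ⟨2*n-3, by omega⟩
  rw [hs, pp]
  split_ifs with h h3
  · have h1 : s + 3 < 2*r := by omega
    rw [pp_eq_zero (s+3-3) (2*r-3) (by omega), pp_eq_zero (s+3-4) (2*r) (by omega)]
    simp
  · have e2 : (s+3) % 2 = 0 := by omega
    rw [show s+3+2*((s+3)%2)-4 = 2*n-4 by omega, show s = 2*n-3 from by omega]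
    simp
    congr 2
  · omega

/-- For every integer `r ≥ 2`, in `ℤ⟦u⟧`:
`(1 - u²)·P_{2r}(1,u) = u·P_{2r-3}(1,u)`. -/
theorem stmt15 (r : ℕ) (hr : 2 ≤ r) :
    (1 - PowerSeries.X ^ 2) * Pone (2 * r) = PowerSeries.X * Pone (2 * r - 3) := by
  ext n
  rw [sub_mul, one_mul, map_sub, PowerSeries.coeff_X_pow_mul',
    ← pow_one (PowerSeries.X : PowerSeries ℤ), PowerSeries.coeff_X_pow_mul']
  simp only [Pone, Pser, PowerSeries.coeff_map, PowerSeries.coeff_mk,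
    Polynomial.coe_evalRingHom]
  rw [if_pos (by omega : (2*r) % 2 = 0), if_pos (by omega : (2*r) % 2 = 0),
    if_neg (by omega : ¬ (2*r-3) % 2 = 0)]
  rcases Nat.lt_or_ge n 2 with hn | hn
  · interval_cases n
    · rw [pp_eq_zero 0 (2*r) (by omega)]
      simp
    · rw [pp_eq_zero (2*1) (2*r) (by omega)]
      simp
  · rw [if_pos (by omega : 2 ≤ n), if_pos (by omega : 1 ≤ n),
      if_neg (by omega : ¬ (n - 1 = 0))]
    have hk := key n r hn hr
    rw [show 2*(n-2) = 2*n-4 by omega, show 2*(n-1)-1 = 2*n-3 by omega, hk]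
    ring
end
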